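/- For n ≥ 3, B_n equals the set of prefixes of length f_{2n−1} of words in B_{n+1}; that is, B_n = B_{n+1}[1, f_{2n−1}]. -/
import Mathlib


/-- The two-letter alphabet. -/
inductive Letter : Type
  | a : Letter
  | b : Letter
deriving DecidableEq

/-- A word is a finite sequence of letters. -/
abbrev Word := List Letter

/-- Concatenation set `UV = {uv : u ∈ U, v ∈ V}`. -/
def concatSet (U V : Set Word) : Set Word := {w | ∃ u ∈ U, ∃ v ∈ V, w = u ++ v}

mutual
  /-- The sets `A_n` of inflated words (indexed so that `Aset 1 = {a}`). -/
  def Aset : ℕ → Set Word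
    | 0 => ∅
    | 1 => {[Letter.a]}
    | n + 2 => concatSet (Bset (n + 1)) (concatSet (Aset (n + 1)) (Aset (n + 1)))
  /-- The sets `B_n` of inflated words (indexed so that `Bset 1 = {b}`). -/
  def Bset : ℕ → Set Word
    | 0 => ∅
    | 1 => {[Letter.b]}
    | n + 2 => concatSet (Aset (n + 1)) (Bset (n + 1)) ∪ concatSet (Bset (n + 1)) (Aset (n + 1))
end

/-- The sub-word `w[a,b] = w_a w_{a+1} … w_b` (1-indexed). -/
def wordSlice (w : Word) (i j : ℕ) : Word := (w.drop (i - 1)).take (j - i + 1)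

/-- `W[a,b] = {w[a,b] : w ∈ W}`. -/
def setSlice (W : Set Word) (i j : ℕ) : Set Word := {x | ∃ w ∈ W, x = wordSlice w i j}

/-- `x` is a sub-word (contiguous factor) of `w`. -/
def IsFactor (x w : Word) : Prop := ∃ u v : Word, w = u ++ x ++ v

/-- `F(S, m)`: the set of all sub-words of length `m` of words in `S`. -/
def FactorSet (S : Set Word) (m : ℕ) : Set Word :=
  {x | x.length = m ∧ ∃ w ∈ S, IsFactor x w}

/-- `F(A, m) = ⋃_{n ≥ 1} F(A_n, m)`. -/
def FA (m : ℕ) : Set Word := ⋃ n ∈ {n : ℕ | 1 ≤ n}, FactorSet (Aset n) m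

/-- `F(B, m) = ⋃_{n ≥ 1} F(B_n, m)`. -/
def FB (m : ℕ) : Set Word := ⋃ n ∈ {n : ℕ | 1 ≤ n}, FactorSet (Bset n) m

/-- The golden mean `τ = (1 + √5)/2`. -/
noncomputable def tau : ℝ := (1 + Real.sqrt 5) / 2

lemma len_spec : ∀ n, (∀ w ∈ Aset n, w.length = Nat.fib (2*n)) ∧
    (∀ w ∈ Bset n, w.length = Nat.fib (2*n - 1)) := by
  intro n
  induction n with
  | zero => constructor <;> intro w hw <;> simp [Aset, Bset] at hw
  | succ k ih =>
    match k, ih with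
    | 0, _ =>
      constructor <;> intro w hw <;> simp [Aset, Bset] at hw <;> subst hw <;> simp
    | k+1, ih =>
      obtain ⟨ihA, ihB⟩ := ih
      constructor
      · rintro w ⟨u, hu, v, ⟨p, hp, q, hq, rfl⟩, rfl⟩
        simp only [List.length_append, ihB u hu, ihA p hp, ihA q hq]
        have h1 : 2*(k+1) - 1 = 2*k+1 := by omega
        have h2 : 2*(k+1) = 2*k+2 := by ring
        have h3 : 2*(k+1+1) = 2*k+4 := by ring
        rw [h1, h2, h3]
        have e1 : Nat.fib (2*k+3) = Nat.fib (2*k+1) + Nat.fib (2*k+2) := by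
          rw [show 2*k+3 = (2*k+1)+2 by ring]; exact Nat.fib_add_two
        have e2 : Nat.fib (2*k+4) = Nat.fib (2*k+2) + Nat.fib (2*k+3) := by
          rw [show 2*k+4 = (2*k+2)+2 by ring]; exact Nat.fib_add_two
        omega
      · rintro w (⟨u, hu, v, hv, rfl⟩ | ⟨u, hu, v, hv, rfl⟩) <;>
          simp only [List.length_append]
        · rw [ihA u hu, ihB v hv]
          have h1 : 2*(k+1) - 1 = 2*k+1 := by omega
          have h2 : 2*(k+1) = 2*k+2 := by ring
          have h3 : 2*(k+1+1) - 1 = 2*k+3 := by omega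
          rw [h1, h2, h3]
          have e1 : Nat.fib (2*k+3) = Nat.fib (2*k+1) + Nat.fib (2*k+2) := by
            rw [show 2*k+3 = (2*k+1)+2 by ring]; exact Nat.fib_add_two
          omega
        · rw [ihB u hu, ihA v hv]
          have h1 : 2*(k+1) - 1 = 2*k+1 := by omega
          have h2 : 2*(k+1) = 2*k+2 := by ring
          have h3 : 2*(k+1+1) - 1 = 2*k+3 := by omega
          rw [h1, h2, h3]
          have e1 : Nat.fib (2*k+3) = Nat.fib (2*k+1) + Nat.fib (2*k+2) := by
            rw [show 2*k+3 = (2*k+1)+2 by ring]; exact Nat.fib_add_two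
          omega

lemma AB_nonempty : ∀ n, 1 ≤ n → (Aset n).Nonempty ∧ (Bset n).Nonempty := by
  intro n
  induction n with
  | zero => omega
  | succ k ih =>
    match k, ih with
    | 0, _ => exact fun _ => ⟨⟨_, rfl⟩, ⟨_, rfl⟩⟩
    | k+1, ih =>
      intro _
      obtain ⟨⟨a, ha⟩, ⟨b, hb⟩⟩ := ih (by omega)
      exact ⟨⟨b ++ (a ++ a), b, hb, a ++ a, ⟨a, ha, a, ha, rfl⟩, rfl⟩,
        ⟨a ++ b, Or.inl ⟨a, ha, b, hb, rfl⟩⟩⟩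

/-- Prefix of length fib(2n-1) of a word in A_n lies in B_n (n ≥ 2). -/
lemma take_Aset (k : ℕ) : ∀ w ∈ Aset (k+2), w.take (Nat.fib (2*(k+2) - 1)) ∈ Bset (k+2) := by
  rintro w ⟨u, hu, v, ⟨p, hp, q, hq, rfl⟩, rfl⟩
  have lu := (len_spec (k+1)).2 u hu
  have lp := (len_spec (k+1)).1 p hp
  have hlen : (u ++ p).length = Nat.fib (2*(k+2) - 1) := by
    simp only [List.length_append, lu, lp]
    have h1 : 2*(k+1) - 1 = 2*k+1 := by omega
    have h2 : 2*(k+1) = 2*k+2 := by ring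
    have h3 : 2*(k+2) - 1 = 2*k+3 := by omega
    rw [h1, h2, h3]
    have e1 : Nat.fib (2*k+3) = Nat.fib (2*k+1) + Nat.fib (2*k+2) := by
      rw [show 2*k+3 = (2*k+1)+2 by ring]; exact Nat.fib_add_two
    omega
  have : u ++ (p ++ q) = (u ++ p) ++ q := by simp
  rw [this, ← hlen, List.take_left]
  exact Or.inr ⟨u, hu, p, hp, rfl⟩

theorem Bset_eq_prefix_succ (n : ℕ) (hn : 3 ≤ n) :
    Bset n = setSlice (Bset (n + 1)) 1 (Nat.fib (2 * n - 1)) := by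
  obtain ⟨m, rfl⟩ : ∃ m, n = m + 2 := ⟨n - 2, by omega⟩
  have hfibpos : 1 ≤ Nat.fib (2 * (m+2) - 1) := Nat.fib_pos.mpr (by omega)
  have hslice : ∀ w : Word, wordSlice w 1 (Nat.fib (2*(m+2)-1)) =
      w.take (Nat.fib (2*(m+2)-1)) := by
    intro w
    unfold wordSlice
    simp only [Nat.sub_self, List.drop_zero]
    congr 1
    omega
  ext x
  constructor
  · intro hx
    obtain ⟨⟨a, ha⟩, -⟩ := AB_nonempty (m+2) (by omega)
    refine ⟨x ++ a, Or.inr ⟨x, hx, a, ha, rfl⟩, ?_⟩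
    rw [hslice]
    have lx := (len_spec (m+2)).2 x hx
    rw [← lx, List.take_left]
  · rintro ⟨w, hw, rfl⟩
    rw [hslice]
    rcases hw with ⟨u, hu, v, hv, rfl⟩ | ⟨u, hu, v, hv, rfl⟩
    · -- u ∈ Aset (m+2), v ∈ Bset (m+2)
      have lu := (len_spec (m+2)).1 u hu
      have hle : Nat.fib (2*(m+2)-1) ≤ u.length := by
        rw [lu]
        exact Nat.fib_mono (by omega)
      rw [List.take_append_of_le_length hle]
      exact take_Aset m u hu
    · have lu := (len_spec (m+2)).2 u hu
      rw [← lu, List.take_left]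
      exact hu
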